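/- Let g : {0,1}^n → ℝ and define the deletion AUC' = Σ_{j=0}^{n} g(e_{(n-j+1):n}), i.e., switching variables in the order n, n-1, ..., 1. Then AUC' = Σ_{u ⊆ {1,...,n}} ⌊u⌋ · Δ_u, where Δ_u = Σ_{v ⊆ u} (−1)^{|u|−|v|} g(e_v), ⌊u⌋ = min u with ⌊∅⌋ = n+1. -/

import Mathlib

/-!
Möbius inversion on the Boolean lattice writes `g v` as `∑_{u ⊆ v} Δ_u`. Summing this over the
`n + 1` suffix sets and exchanging the sums, `Δ_u` is counted once for every suffix containing
`u`; the suffix of the last `j` coordinates contains `u` iff `j ≥ n + 1 - ⌊u⌋`, which happens for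
exactly `⌊u⌋` values of `j ∈ {0, …, n}`.
-/

open Finset

/-- The anchored interaction `Δ_u = Σ_{v ⊆ u} (−1)^{|u|−|v|} g(e_v)`, where
points of `{0,1}^n` are identified with subsets of `Fin n`. -/
noncomputable def interaction {n : ℕ} (g : Finset (Fin n) → ℝ)
    (u : Finset (Fin n)) : ℝ :=
  ∑ v ∈ u.powerset, (-1 : ℝ) ^ (u.card - v.card) * g v

/-- `⌊u⌋`: the minimum of `u` viewed as a subset of `{1,...,n}` (coordinate
`i : Fin n` corresponds to variable `i+1`), with `⌊∅⌋ = n+1`. -/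
noncomputable def floorSet {n : ℕ} (u : Finset (Fin n)) : ℕ :=
  if h : u.Nonempty then (u.min' h).val + 1 else n + 1

namespace Finset

variable {α R : Type*} [DecidableEq α] [Ring R]

theorem sum_Icc_neg_one_pow_card_sub {s t : Finset α} (h : s ⊆ t) :
    ∑ u ∈ Icc s t, (-1 : R) ^ (#u - #s) = if s = t then 1 else 0 := by
  have hinj : Set.InjOn (s ∪ ·) (t \ s).powerset := by
    simpa only [union_comm s] using (disjoint_injOn_union_left s).mono fun x hx =>
      (disjoint_sdiff.mono_right (mem_powerset.1 hx) : Disjoint s x)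
  rw [Icc_eq_image_powerset h, sum_image hinj]
  have hcard : ∀ x ∈ (t \ s).powerset, #(s ∪ x) - #s = #x := fun x hx => by
    rw [card_union_of_disjoint (disjoint_sdiff.mono_right (mem_powerset.1 hx)),
      Nat.add_sub_cancel_left]
  rw [sum_congr rfl fun x hx => by rw [hcard x hx]]
  have hsum := congrArg (Int.cast : ℤ → R) (sum_powerset_neg_one_pow_card (x := t \ s))
  push_cast at hsum
  rw [hsum]
  refine if_congr ?_ rfl rfl
  rw [sdiff_eq_empty_iff_subset]
  exact ⟨h.antisymm, fun hst => hst ▸ subset_rfl⟩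

theorem sum_powerset_sum_powerset_neg_one_pow_mul (f : Finset α → R) (s : Finset α) :
    ∑ t ∈ s.powerset, ∑ u ∈ t.powerset, (-1 : R) ^ (#t - #u) * f u = f s := by
  rw [sum_comm' (t' := s.powerset) (s' := fun u => Icc u s) fun t u => by
    simp only [mem_powerset, mem_Icc]
    exact ⟨fun ⟨hts, hut⟩ => ⟨⟨hut, hts⟩, hut.trans hts⟩, fun ⟨⟨hut, hts⟩, _⟩ => ⟨hts, hut⟩⟩]
  calc ∑ u ∈ s.powerset, ∑ t ∈ Icc u s, (-1 : R) ^ (#t - #u) * f u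
      = ∑ u ∈ s.powerset, if u = s then f u else 0 := sum_congr rfl fun u hu => by
        rw [← sum_mul, sum_Icc_neg_one_pow_card_sub (mem_powerset.1 hu), ite_mul, one_mul,
          zero_mul]
    _ = f s := by rw [sum_ite_eq', if_pos (mem_powerset_self s)]

theorem sum_sum_powerset_eq_sum_card_nsmul {ι M : Type*} [Fintype α] [AddCommMonoid M]
    (s : Finset ι) (S : ι → Finset α) (f : Finset α → M) :
    ∑ j ∈ s, ∑ u ∈ (S j).powerset, f u = ∑ u, #{j ∈ s | u ⊆ S j} • f u := by
  rw [sum_comm' (t' := univ) (s' := fun u => {j ∈ s | u ⊆ S j}) fun j u => by simp]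
  exact sum_congr rfl fun u _ => sum_const _

end Finset

theorem sum_powerset_interaction {n : ℕ} (g : Finset (Fin n) → ℝ) (s : Finset (Fin n)) :
    ∑ u ∈ s.powerset, interaction g u = g s :=
  sum_powerset_sum_powerset_neg_one_pow_mul g s

def lastCoords (n j : ℕ) : Finset (Fin n) := {i | n - j ≤ i.val}

theorem floorSet_le {n : ℕ} (u : Finset (Fin n)) : floorSet u ≤ n + 1 := by
  unfold floorSet
  split_ifs with h
  · exact Nat.succ_le_succ (u.min' h).isLt.le
  · exact le_rfl

theorem subset_lastCoords_iff {n j : ℕ} {u : Finset (Fin n)} :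
    u ⊆ lastCoords n j ↔ n + 1 - floorSet u ≤ j := by
  simp only [lastCoords, subset_iff, mem_filter, mem_univ, true_and, floorSet]
  split_ifs with h
  · have hlt := (u.min' h).isLt
    constructor
    · intro hu
      have := hu (u.min'_mem h)
      omega
    · intro hj i hi
      have : (u.min' h).val ≤ i.val := u.min'_le i hi
      omega
  · rw [not_nonempty_iff_eq_empty] at h
    simp [h]

theorem card_filter_subset_lastCoords {n : ℕ} (u : Finset (Fin n)) :
    #{j ∈ range (n + 1) | u ⊆ lastCoords n j} = floorSet u := by
  simp_rw [subset_lastCoords_iff, range_eq_Ico, Ico_filter_le, Nat.card_Ico]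
  have := floorSet_le u
  omega

/-- Deletion AUC: `AUC' = Σ_{j=0}^{n} g(e_{(n-j+1):n}) = Σ_u ⌊u⌋ Δ_u`,
where `e_{(n-j+1):n}` is the indicator of the last `j` coordinates. -/
theorem deletion_auc_eq_sum_interactions {n : ℕ} (g : Finset (Fin n) → ℝ) :
    ∑ j ∈ Finset.range (n + 1), g (univ.filter fun i : Fin n => n - j ≤ i.val)
      = ∑ u : Finset (Fin n), ((floorSet u : ℕ) : ℝ) * interaction g u := by
  calc ∑ j ∈ range (n + 1), g (lastCoords n j)
      = ∑ j ∈ range (n + 1), ∑ u ∈ (lastCoords n j).powerset, interaction g u := by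
        simp only [sum_powerset_interaction]
    _ = ∑ u, #{j ∈ range (n + 1) | u ⊆ lastCoords n j} • interaction g u :=
        sum_sum_powerset_eq_sum_card_nsmul _ _ _
    _ = ∑ u, (floorSet u : ℝ) * interaction g u := by
        simp only [card_filter_subset_lastCoords, nsmul_eq_mul]
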